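/- arXiv:1812.00434 — 2 statements merged into one kernel-verified Lean document; each statement's English description precedes it below -/
import Mathlib

section
/- For every positive integer r, the exponential generating function of the colored binomial Eulerian polynomials satisfies, in the ring (ℚ[t])[[z]], the identity (e^{rtz} − t·e^{rz}) · Σ_{n≥0} Ã_{n,r}(t) zⁿ/n! = (1−t)·e^{(rt+1)z}, where for a ∈ ℚ[t] the symbol e^{az} denotes the formal power series Σ_{n≥0} aⁿ zⁿ/n! in (ℚ[t])[[z]]. -/
open Polynomial Finset

/-- An `r`-colored permutation of `[n] = {1,…,n}`: a pair `(σ, ε)` of a permutation `σ`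
of `[n]` and a color vector `ε ∈ {0,…,r−1}ⁿ`; the set of these is `ℤ_r ≀ S_n`. -/
abbrev ColoredPerm (n r : ℕ) := Equiv.Perm (Fin n) × (Fin n → Fin r)

/-- The (1-based) value `σ(k) ∈ [n]` of a permutation of `[n]` at position `k ∈ [n]`,
with the convention `σ(k) = n+1` for positions outside `[1,n]`. -/
def sVal {n : ℕ} (σ : Equiv.Perm (Fin n)) (k : ℕ) : ℕ :=
  if h : 1 ≤ k ∧ k ≤ n then (σ ⟨k - 1, by omega⟩ : ℕ) + 1 else n + 1

/-- The (1-based) color `ε_k` at position `k ∈ [n]`, with the convention `ε_k = 0`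
for positions outside `[1,n]`. -/
def eVal {n r : ℕ} (ε : Fin n → Fin r) (k : ℕ) : ℕ :=
  if h : 1 ≤ k ∧ k ≤ n then (ε ⟨k - 1, by omega⟩ : ℕ) else 0

/-- The descent set `Des(w) ⊆ [n]` of an `r`-colored permutation `w = (σ, ε)`:
`k ∈ [n]` is a descent if `ε_k > ε_{k+1}`, or `ε_k = ε_{k+1}` and `σ(k) > σ(k+1)`,
with the conventions `σ(n+1) = n+1` and `ε_{n+1} = 0`. -/
def desSet {n r : ℕ} (w : ColoredPerm n r) : Finset ℕ :=
  (Finset.Icc 1 n).filter fun k =>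
    eVal w.2 (k + 1) < eVal w.2 k ∨
      (eVal w.2 k = eVal w.2 (k + 1) ∧ sVal w.1 (k + 1) < sVal w.1 k)

/-- The ascent set `Asc(w) = [n] ∖ Des(w)`. -/
def ascSet {n r : ℕ} (w : ColoredPerm n r) : Finset ℕ :=
  Finset.Icc 1 n \ desSet w

/-- The excedance set of `w = (σ, ε)`: the set of `k ∈ [n]` with `σ(k) > k`, or
`σ(k) = k` and `ε_k ≠ 0`. -/
def excSet {n r : ℕ} (w : ColoredPerm n r) : Finset ℕ :=
  (Finset.Icc 1 n).filter fun k => k < sVal w.1 k ∨ (sVal w.1 k = k ∧ eVal w.2 k ≠ 0)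

/-- The colored Eulerian polynomial `A_{n,r}(t) = Σ_{w ∈ ℤ_r≀S_n} t^{des(w)}`
(with `A_{0,r}(t) = 1`). -/
noncomputable def colEulerian (n r : ℕ) : ℤ[X] :=
  ∑ w : ColoredPerm n r, X ^ (desSet w).card

/-- The colored binomial Eulerian polynomial
`Ã_{n,r}(t) = Σ_{m=0}^n C(n,m) t^{n−m} A_{m,r}(t)`. -/
noncomputable def colBinomEulerian (n r : ℕ) : ℤ[X] :=
  ∑ m ∈ range (n + 1), (n.choose m : ℤ[X]) * X ^ (n - m) * colEulerian m r

/-- The colored Eulerian polynomial `A_{n,r}(t)` as a polynomial over `ℚ`. -/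
noncomputable def colEulerianQ (n r : ℕ) : ℚ[X] :=
  ∑ w : ColoredPerm n r, X ^ (desSet w).card

/-- The colored binomial Eulerian polynomial `Ã_{n,r}(t)` as a polynomial over `ℚ`. -/
noncomputable def colBinomEulerianQ (n r : ℕ) : ℚ[X] :=
  ∑ m ∈ range (n + 1), (n.choose m : ℚ[X]) * X ^ (n - m) * colEulerianQ m r

/-- The formal exponential `e^{az} = Σ_{n≥0} aⁿ zⁿ/n!` in `(ℚ[t])[[z]]`, for `a ∈ ℚ[t]`. -/
noncomputable def expz (a : ℚ[X]) : PowerSeries ℚ[X] :=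
  PowerSeries.mk fun n => Polynomial.C ((n.factorial : ℚ)⁻¹) * a ^ n

/-!
Stably sorting a word `f ∈ {0,…,jr}^m` and reducing its letters mod `r` yields a colored
permutation `w`; the words over `w` correspond to strictly increasing sequences in
`[0, j + m − des w)`, which gives the colored Worpitzky identity
`Σ_w C(j + m − des w, m) = (jr + 1)^m`. Equivalently `A_{m,r}(t) = (1 − t)^{m+1} Σ_j (rj + 1)^m tʲ`,
hence `Ã_{n,r}(t) = (1 − t) L((t + (1 − t)y)ⁿ)` with `L(P) = Σ_j P(rj + 1) tʲ`. The `zⁿ/n!`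
coefficient of the left-hand side is then `(1 − t) (L(Q) − t L(Q(y + r)))` with
`Q = (rt + t + (1 − t)y)ⁿ`, and `L(Q) = Q(1) + t L(Q(y + r))` collapses it to `(1 − t)(rt + 1)ⁿ`.
-/

section Sequences

variable {α : Type*} {m : ℕ}

def extendSeq (g : Fin m → α) (d : α) (p : ℕ) : α :=
  if h : p < m then g ⟨p, h⟩ else d

lemma extendSeq_of_lt (g : Fin m → α) (d : α) (i : Fin m) : extendSeq g d i = g i := by
  simp [extendSeq]

lemma extendSeq_self (g : Fin m → α) (d : α) : extendSeq g d m = d := by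
  simp [extendSeq]

lemma strictMono_and_forall_lt_iff [Preorder α] (g : Fin m → α) (d : α) :
    (StrictMono g ∧ ∀ i, g i < d) ↔ ∀ p < m, extendSeq g d p < extendSeq g d (p + 1) := by
  have hsnoc : ∀ i : Fin (m + 1), Fin.snoc (α := fun _ => α) g d i = extendSeq g d i := by
    intro i
    simp only [Fin.snoc, extendSeq]
    split_ifs <;> rfl
  have hsnocMono := Fin.strictMono_insertNth_iff (Fin.last m) d g
  rw [Fin.insertNth_last', Fin.strictMono_iff_lt_succ] at hsnocMono
  simp only [Fin.castSucc_lt_last, forall_const, Fin.last_le_iff, Fin.castSucc_ne_last,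
    IsEmpty.forall_iff, hsnoc, Fin.val_castSucc, Fin.val_succ, forall_true_iff,
    and_true] at hsnocMono
  rw [← hsnocMono]
  exact ⟨fun h p hp => h ⟨p, hp⟩, fun h i => h i i.2⟩

def ascentsBelow [LT α] [DecidableLT α] (x : ℕ → α) (k : ℕ) : ℕ :=
  #{p ∈ range k | x p < x (p + 1)}

lemma ascentsBelow_succ [LT α] [DecidableLT α] (x : ℕ → α) (k : ℕ) :
    ascentsBelow x (k + 1) = ascentsBelow x k + if x k < x (k + 1) then 1 else 0 := by
  unfold ascentsBelow
  rw [range_add_one, filter_insert]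
  split_ifs <;> simp [card_insert_of_notMem]

lemma ascentsBelow_le [LT α] [DecidableLT α] (x : ℕ → α) (k : ℕ) : ascentsBelow x k ≤ k :=
  (card_filter_le _ _).trans (card_range k).le

lemma toLex_lt_toLex_iff_add_ascentsBelow [LinearOrder α] (q : ℕ → ℕ) {x : ℕ → α} {p : ℕ}
    (hx : x p ≠ x (p + 1)) :
    toLex (q p, x p) < toLex (q (p + 1), x (p + 1)) ↔
      q p + ascentsBelow x p < q (p + 1) + ascentsBelow x (p + 1) := by
  rw [ascentsBelow_succ, Prod.Lex.toLex_lt_toLex]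
  rcases hx.lt_or_gt with h | h
  · simp only [h, if_true, and_true]
    omega
  · simp only [not_lt_of_gt h, if_false, and_false, or_false]
    omega

lemma toLex_mul_add_lt_toLex_mul_add_iff {β : Type*} [Preorder β] {r q q' e e' : ℕ}
    (he : e < r) (he' : e' < r) (s s' : β) :
    toLex (q * r + e, s) < toLex (q' * r + e', s') ↔
      toLex (q, toLex (e, s)) < toLex (q', toLex (e', s')) := by
  simp only [Prod.Lex.toLex_lt_toLex]
  rcases lt_trichotomy q q' with h | rfl | h
  · have : (q + 1) * r ≤ q' * r := Nat.mul_le_mul_right r h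
    simp only [h, true_or, iff_true]
    exact Or.inl (by nlinarith)
  · simp
  · have : (q' + 1) * r ≤ q * r := Nat.mul_le_mul_right r h
    simp only [h.not_gt, h.ne', false_or, false_and, iff_false, not_or, not_and]
    refine ⟨by nlinarith, fun h' => by nlinarith⟩

lemma val_le_of_strictMono {b : Fin m → ℕ} (hb : StrictMono b) (i : Fin m) : (i : ℕ) ≤ b i := by
  have hsub : (Iic i).image b ⊆ range (b i + 1) := by
    intro x hx
    obtain ⟨k, hk, rfl⟩ := mem_image.mp hx
    exact mem_range_succ_iff.mpr (hb.monotone (mem_Iic.mp hk))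
  have := card_le_card hsub
  rwa [card_image_of_injective _ hb.injective, Fin.card_Iic, card_range,
    Nat.add_le_add_iff_right] at this

end Sequences

section Keys

variable {m r : ℕ}

/-- `sortKey w p` is the pair `(ε_{p+1}, σ(p+1))` compared in `desSet` (positions are 0-based
here), and `sortKey w m = (0, m + 1)` is the sentinel. -/
def sortKey (w : ColoredPerm m r) (p : ℕ) : ℕ ×ₗ ℕ :=
  toLex (eVal w.2 (p + 1), sVal w.1 (p + 1))

lemma eVal_succ (ε : Fin m → Fin r) (i : Fin m) : eVal ε (i + 1) = ε i := by
  simp [eVal, Nat.succ_le_of_lt i.2]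

lemma sVal_succ (σ : Equiv.Perm (Fin m)) (i : Fin m) : sVal σ (i + 1) = σ i + 1 := by
  simp [sVal, Nat.succ_le_of_lt i.2]

lemma eVal_last (ε : Fin m → Fin r) : eVal ε (m + 1) = 0 := by
  simp [eVal]

lemma sVal_last (σ : Equiv.Perm (Fin m)) : sVal σ (m + 1) = m + 1 := by
  simp [sVal]

lemma eVal_lt [NeZero r] (ε : Fin m → Fin r) (k : ℕ) : eVal ε k < r := by
  unfold eVal
  split_ifs
  · exact Fin.is_lt _
  · exact Nat.pos_of_neZero r

lemma sortKey_ne_sortKey_succ (w : ColoredPerm m r) {p : ℕ} (hp : p < m) :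
    sortKey w p ≠ sortKey w (p + 1) := by
  intro h
  have hs := congrArg (fun x => (ofLex x).2) h
  simp only [sortKey, ofLex_toLex] at hs
  rw [sVal_succ w.1 ⟨p, hp⟩] at hs
  rcases Nat.lt_or_ge (p + 1) m with hp' | hp'
  · rw [sVal_succ w.1 ⟨p + 1, hp'⟩] at hs
    exact absurd (w.1.injective (Fin.ext (Nat.succ_injective hs))) (by simp [Fin.ext_iff])
  · rw [show p + 1 = m by omega, sVal_last] at hs
    have := (w.1 ⟨p, hp⟩).2
    omega

lemma card_desSet (w : ColoredPerm m r) :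
    #(desSet w) = #{p ∈ range m | sortKey w (p + 1) < sortKey w p} := by
  have hIcc : Icc 1 m = (range m).map (addRightEmbedding 1) := by
    ext k; simp only [mem_Icc, mem_map, mem_range, addRightEmbedding_apply]
    exact ⟨fun h => ⟨k - 1, by omega, by omega⟩, by rintro ⟨p, hp, rfl⟩; omega⟩
  rw [desSet, hIcc, filter_map, card_map]
  congr 1
  apply filter_congr
  intro p _
  simp [sortKey, Prod.Lex.toLex_lt_toLex, eq_comm]

lemma ascentsBelow_sortKey_add_card_desSet (w : ColoredPerm m r) :
    ascentsBelow (sortKey w) m + #(desSet w) = m := by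
  rw [card_desSet, ascentsBelow]
  conv_rhs => rw [← card_range m, ← card_filter_add_card_filter_not (s := range m)
    (fun p => sortKey w p < sortKey w (p + 1))]
  congr 2
  apply filter_congr
  intro p hp
  exact ⟨fun h => not_lt.mpr h.le,
    fun h => lt_of_le_of_ne (not_lt.mp h) (sortKey_ne_sortKey_succ w (mem_range.mp hp)).symm⟩

lemma card_desSet_le (w : ColoredPerm m r) : #(desSet w) ≤ m := by
  have := ascentsBelow_sortKey_add_card_desSet w
  omega

end Keys

section Sorting

variable {m r : ℕ}

def toColoredPerm [NeZero r] (f : Fin m → ℕ) : ColoredPerm m r :=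
  (Tuple.sort f, fun i => ⟨f (Tuple.sort f i) % r, Nat.mod_lt _ (Nat.pos_of_neZero r)⟩)

lemma toColoredPerm_eq_iff [NeZero r] (f : Fin m → ℕ) (w : ColoredPerm m r) :
    toColoredPerm f = w ↔ Tuple.sort f = w.1 ∧ ∀ i, f (w.1 i) % r = w.2 i := by
  rcases w with ⟨σ, ε⟩
  simp only [toColoredPerm, Prod.mk.injEq, funext_iff, Fin.ext_iff]
  constructor <;> rintro ⟨rfl, h⟩ <;> exact ⟨rfl, h⟩

lemma sort_eq_iff_strictMono (f : Fin m → ℕ) (σ : Equiv.Perm (Fin m)) :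
    Tuple.sort f = σ ↔ StrictMono fun i => toLex (f (σ i), (σ i : ℕ) + 1) := by
  have hgraph : ∀ a b : Fin m, Tuple.graphEquiv₁ f a < Tuple.graphEquiv₁ f b ↔
      toLex (f a, a) < toLex (f b, b) := fun _ _ => Iff.rfl
  rw [eq_comm, Tuple.eq_sort_iff']
  simp only [StrictMono, Equiv.trans_apply, hgraph, Prod.Lex.toLex_lt_toLex, Fin.lt_def,
    Nat.add_lt_add_iff_right]

end Sorting

section Encoding

variable {m r : ℕ}

def toStrictSeq (w : ColoredPerm m r) (f : Fin m → ℕ) (i : Fin m) : ℕ :=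
  f (w.1 i) / r + ascentsBelow (sortKey w) i

def ofStrictSeq (w : ColoredPerm m r) (b : Fin m → ℕ) (k : Fin m) : ℕ :=
  (b (w.1.symm k) - ascentsBelow (sortKey w) (w.1.symm k)) * r + w.2 (w.1.symm k)

/- Write `f (σ i) = qᵢ r + εᵢ`. Stable sorting by `σ` means that `(qᵢ, sortKey w i)` increases
lexicographically, the bound `f ≤ j r` is the comparison with the sentinel `(j, sortKey w m)`, and
such a chain is the same as a strictly increasing `qᵢ + #(ascents before i)`. -/
lemma forall_le_and_sort_eq_iff [NeZero r] (j : ℕ) (w : ColoredPerm m r) {f : Fin m → ℕ}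
    (hf : ∀ i, f (w.1 i) % r = w.2 i) :
    ((∀ i, f i ≤ j * r) ∧ Tuple.sort f = w.1) ↔
      StrictMono (toStrictSeq w f) ∧ ∀ i, toStrictSeq w f i < j + ascentsBelow (sortKey w) m := by
  set g : Fin m → ℕ ×ₗ ℕ := fun i => toLex (f (w.1 i), (w.1 i : ℕ) + 1)
  set Q := extendSeq (fun i => f (w.1 i) / r) j
  have hbound : (∀ i, f i ≤ j * r) ↔ ∀ i, g i < toLex (j * r, m + 1) := by
    rw [← w.1.forall_congr_right]
    refine forall_congr' fun i => ?_
    simp only [g, Prod.Lex.toLex_lt_toLex, Nat.add_lt_add_iff_right, (w.1 i).2, and_true]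
    omega
  have hg : ∀ p ≤ m, extendSeq g (toLex (j * r, m + 1)) p =
      toLex (Q p * r + eVal w.2 (p + 1), sVal w.1 (p + 1)) := by
    intro p hp
    rcases hp.lt_or_eq with hp | rfl
    · obtain ⟨i, rfl⟩ : ∃ i : Fin m, (i : ℕ) = p := ⟨⟨p, hp⟩, rfl⟩
      simp only [Q, g, extendSeq_of_lt, eVal_succ, sVal_succ, ← hf i, Nat.div_add_mod']
    · simp only [Q, extendSeq_self, eVal_last, sVal_last, add_zero]
  have henc : ∀ p ≤ m, extendSeq (toStrictSeq w f) (j + ascentsBelow (sortKey w) m) p =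
      Q p + ascentsBelow (sortKey w) p := by
    intro p hp
    rcases hp.lt_or_eq with hp | rfl
    · obtain ⟨i, rfl⟩ : ∃ i : Fin m, (i : ℕ) = p := ⟨⟨p, hp⟩, rfl⟩
      simp only [Q, toStrictSeq, extendSeq_of_lt]
    · simp only [Q, extendSeq_self]
  rw [hbound, sort_eq_iff_strictMono, and_comm, strictMono_and_forall_lt_iff,
    strictMono_and_forall_lt_iff]
  refine forall₂_congr fun p hp => ?_
  rw [hg p hp.le, hg (p + 1) hp, henc p hp.le, henc (p + 1) hp,
    toLex_mul_add_lt_toLex_mul_add_iff (eVal_lt _ _) (eVal_lt _ _)]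
  exact toLex_lt_toLex_iff_add_ascentsBelow Q (sortKey_ne_sortKey_succ w hp)

lemma ofStrictSeq_apply (w : ColoredPerm m r) (b : Fin m → ℕ) (i : Fin m) :
    ofStrictSeq w b (w.1 i) = (b i - ascentsBelow (sortKey w) i) * r + w.2 i := by
  simp [ofStrictSeq]

lemma ofStrictSeq_apply_mod (w : ColoredPerm m r) (b : Fin m → ℕ) (i : Fin m) :
    ofStrictSeq w b (w.1 i) % r = w.2 i := by
  rw [ofStrictSeq_apply, Nat.mul_add_mod_self_right, Nat.mod_eq_of_lt (w.2 i).2]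

lemma toStrictSeq_ofStrictSeq [NeZero r] (w : ColoredPerm m r) {b : Fin m → ℕ}
    (hb : ∀ i : Fin m, ascentsBelow (sortKey w) i ≤ b i) : toStrictSeq w (ofStrictSeq w b) = b := by
  funext i
  rw [toStrictSeq, ofStrictSeq_apply, add_comm _ (w.2 i : ℕ),
    Nat.add_mul_div_right _ _ (Nat.pos_of_neZero r), Nat.div_eq_of_lt (w.2 i).2, zero_add,
    Nat.sub_add_cancel (hb i)]

lemma ofStrictSeq_toStrictSeq (w : ColoredPerm m r) {f : Fin m → ℕ}
    (hf : ∀ i, f (w.1 i) % r = w.2 i) : ofStrictSeq w (toStrictSeq w f) = f := by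
  funext k
  obtain ⟨i, rfl⟩ := w.1.surjective k
  rw [ofStrictSeq_apply, toStrictSeq, Nat.add_sub_cancel, ← hf i, Nat.div_add_mod']

end Encoding

section Counting

variable {m r : ℕ}

lemma ncard_strictMono_lt (m N : ℕ) :
    {b : Fin m → ℕ | StrictMono b ∧ ∀ i, b i < N}.ncard = N.choose m := by
  let e : {b : Fin m → ℕ | StrictMono b ∧ ∀ i, b i < N} ≃ (Fin m ↪o Fin N) :=
    { toFun b := OrderEmbedding.ofStrictMono (fun i => ⟨b.1 i, b.2.2 i⟩) fun _ _ h => b.2.1 h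
      invFun e := ⟨fun i => e i, fun _ _ h => e.strictMono h, fun i => (e i).2⟩
      left_inv _ := rfl
      right_inv _ := rfl }
  rw [← Nat.card_coe_set_eq, Nat.card_congr (e.trans Set.powersetCard.ofFinEmbEquiv),
    Set.powersetCard.card, Nat.card_eq_fintype_card, Fintype.card_fin]

lemma card_fiber_toColoredPerm [NeZero r] (j : ℕ) (w : ColoredPerm m r) :
    #{f ∈ Fintype.piFinset fun _ => range (j * r + 1) | toColoredPerm f = w} =
      (j + m - #(desSet w)).choose m := by
  have hS : (({f ∈ Fintype.piFinset fun _ => range (j * r + 1) | toColoredPerm f = w} :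
      Finset (Fin m → ℕ)) : Set (Fin m → ℕ)) =
      {f | (∀ i, f (w.1 i) % r = w.2 i) ∧ (∀ i, f i ≤ j * r) ∧ Tuple.sort f = w.1} := by
    ext f
    simp only [coe_filter, Fintype.mem_piFinset, mem_range, Nat.lt_succ_iff,
      toColoredPerm_eq_iff, Set.mem_ofPred_eq]
    tauto
  have hc : ∀ (b : Fin m → ℕ), StrictMono b → ∀ i : Fin m, ascentsBelow (sortKey w) i ≤ b i :=
    fun b hb i => (ascentsBelow_le _ _).trans (val_le_of_strictMono hb i)
  have hN : j + m - #(desSet w) = j + ascentsBelow (sortKey w) m := by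
    have := ascentsBelow_sortKey_add_card_desSet w
    omega
  rw [← Set.ncard_coe_finset, hS, hN, ← ncard_strictMono_lt m]
  refine Set.BijOn.ncard_eq
    (Set.InvOn.bijOn (f := toStrictSeq w) (f' := ofStrictSeq w) ⟨?_, ?_⟩ ?_ ?_)
  · exact fun f hf => ofStrictSeq_toStrictSeq w hf.1
  · exact fun b hb => toStrictSeq_ofStrictSeq w (hc b hb.1)
  · exact fun f hf => (forall_le_and_sort_eq_iff j w hf.1).mp hf.2
  · intro b hb
    refine ⟨ofStrictSeq_apply_mod w b,
      (forall_le_and_sort_eq_iff j w (ofStrictSeq_apply_mod w b)).mpr ?_⟩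
    rwa [toStrictSeq_ofStrictSeq w (hc b hb.1)]

theorem sum_choose_sub_card_desSet [NeZero r] (m j : ℕ) :
    ∑ w : ColoredPerm m r, (j + m - #(desSet w)).choose m = (j * r + 1) ^ m := by
  have hcard := card_eq_sum_card_fiberwise
    (s := Fintype.piFinset fun _ : Fin m => range (j * r + 1)) (t := univ)
    (f := toColoredPerm (r := r)) (fun _ _ => mem_univ _)
  rw [Fintype.card_piFinset, prod_const, card_range, card_univ, Fintype.card_fin] at hcard
  simp_rw [hcard, card_fiber_toColoredPerm]

end Counting

section Series

variable {r : ℕ}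

def progressionPowSeries (r i : ℕ) : PowerSeries ℚ :=
  PowerSeries.mk fun j => ((j * r + 1 : ℕ) : ℚ) ^ i

lemma coe_colEulerianQ (m r : ℕ) :
    (colEulerianQ m r : PowerSeries ℚ) = ∑ w : ColoredPerm m r, PowerSeries.X ^ #(desSet w) := by
  rw [colEulerianQ, ← Polynomial.coeToPowerSeries.ringHom_apply, map_sum]
  simp

theorem coe_colEulerianQ_mul_mk_choose [NeZero r] (m : ℕ) :
    (colEulerianQ m r : PowerSeries ℚ) * PowerSeries.mk (fun i => ((m + i).choose m : ℚ)) =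
      progressionPowSeries r m := by
  ext N
  rw [coe_colEulerianQ, sum_mul, map_sum, progressionPowSeries, PowerSeries.coeff_mk,
    ← Nat.cast_pow, ← sum_choose_sub_card_desSet m N, Nat.cast_sum]
  refine sum_congr rfl fun w _ => ?_
  rw [PowerSeries.coeff_X_pow_mul', PowerSeries.coeff_mk]
  split_ifs with h
  · congr 2
    omega
  · rw [Nat.choose_eq_zero_of_lt (by have := card_desSet_le w; omega), Nat.cast_zero]

theorem coe_colEulerianQ_eq [NeZero r] (m : ℕ) :
    (colEulerianQ m r : PowerSeries ℚ) =
      (1 - PowerSeries.X) ^ (m + 1) * progressionPowSeries r m := by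
  rw [← coe_colEulerianQ_mul_mk_choose, mul_left_comm, mul_comm _ (PowerSeries.mk _),
    PowerSeries.mk_add_choose_mul_one_sub_pow_eq_one, mul_one]

lemma progressionPowSeries_eq_one_add_X_mul (r i : ℕ) :
    progressionPowSeries r i = 1 + PowerSeries.X *
      ∑ k ∈ range (i + 1), PowerSeries.C ((r : ℚ) ^ (i - k) * i.choose k) *
        progressionPowSeries r k := by
  ext N
  rcases N with _ | N
  · simp [progressionPowSeries]
  · simp only [progressionPowSeries, map_add, PowerSeries.coeff_one, PowerSeries.coeff_succ_X_mul,
      map_sum, PowerSeries.coeff_C_mul, PowerSeries.coeff_mk]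
    have hshift : (((N + 1) * r + 1 : ℕ) : ℚ) = ((N * r + 1 : ℕ) : ℚ) + r := by push_cast; ring
    rw [hshift, add_pow, if_neg N.succ_ne_zero, zero_add]
    exact sum_congr rfl fun k _ => by ring

/-- `P ↦ Σ_{j ≥ 0} P(rj + 1) tʲ`, defined through the coefficients of `P` so that no infinite sum
of power series is needed. -/
noncomputable def progressionSeries (r : ℕ) :
    (PowerSeries ℚ)[X] →ₗ[PowerSeries ℚ] PowerSeries ℚ :=
  Polynomial.lsum fun i => LinearMap.mulRight (PowerSeries ℚ) (progressionPowSeries r i)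

lemma progressionSeries_monomial (r i : ℕ) (a : PowerSeries ℚ) :
    progressionSeries r (monomial i a) = a * progressionPowSeries r i := by
  simp [progressionSeries]

lemma progressionSeries_eq_eval_add_X_mul (r : ℕ) (P : (PowerSeries ℚ)[X]) :
    progressionSeries r P =
      P.eval 1 + PowerSeries.X * progressionSeries r (P.comp (X + (r : (PowerSeries ℚ)[X]))) := by
  induction P using Polynomial.induction_on' with
  | add p q hp hq => rw [map_add, hp, hq, add_comp, map_add, eval_add]; ring
  | monomial i a =>
    have hcomp : (monomial i a).comp (X + (r : (PowerSeries ℚ)[X])) =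
        ∑ k ∈ range (i + 1), monomial k (a * r ^ (i - k) * i.choose k) := by
      rw [← C_mul_X_pow_eq_monomial, mul_comp, C_comp, X_pow_comp, add_pow, mul_sum]
      refine sum_congr rfl fun k _ => ?_
      rw [← C_mul_X_pow_eq_monomial, ← C_eq_natCast, ← C_eq_natCast, ← C_pow, map_mul, map_mul]
      ring
    rw [progressionSeries_monomial, progressionPowSeries_eq_one_add_X_mul, hcomp, map_sum,
      ← C_mul_X_pow_eq_monomial, eval_mul, eval_C, eval_pow, eval_X, one_pow, mul_one,
      mul_add, mul_one, mul_sum, mul_sum, mul_sum]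
    refine congrArg _ (sum_congr rfl fun k _ => ?_)
    rw [progressionSeries_monomial, map_mul, map_pow, map_natCast, map_natCast]
    ring

theorem coe_colBinomEulerianQ_eq [NeZero r] (n : ℕ) :
    (colBinomEulerianQ n r : PowerSeries ℚ) = (1 - PowerSeries.X) *
      progressionSeries r ((C (1 - PowerSeries.X) * X + C PowerSeries.X) ^ n) := by
  rw [add_pow, map_sum, mul_sum, colBinomEulerianQ, ← Polynomial.coeToPowerSeries.ringHom_apply,
    map_sum]
  refine sum_congr rfl fun m _ => ?_
  have hterm : (C (1 - PowerSeries.X : PowerSeries ℚ) * X) ^ m * C PowerSeries.X ^ (n - m) *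
      (n.choose m : (PowerSeries ℚ)[X]) =
      monomial m ((1 - PowerSeries.X : PowerSeries ℚ) ^ m * PowerSeries.X ^ (n - m) *
        (n.choose m : PowerSeries ℚ)) := by
    rw [← C_mul_X_pow_eq_monomial]
    simp only [map_mul, map_pow, map_natCast]
    ring
  rw [hterm, progressionSeries_monomial]
  simp only [map_mul, map_pow, map_natCast, Polynomial.coeToPowerSeries.ringHom_apply,
    Polynomial.coe_X, coe_colEulerianQ_eq]
  ring

lemma progressionSeries_C_add_pow (r n : ℕ) (a : PowerSeries ℚ) (P : (PowerSeries ℚ)[X]) :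
    progressionSeries r ((C a + P) ^ n) =
      ∑ p ∈ antidiagonal n, n.choose p.1 * a ^ p.1 * progressionSeries r (P ^ p.2) := by
  rw [add_pow, map_sum, Nat.sum_antidiagonal_eq_sum_range_succ
    (fun i j => n.choose i * a ^ i * progressionSeries r (P ^ j))]
  refine sum_congr rfl fun k _ => ?_
  rw [← C_pow, ← C_eq_natCast, mul_right_comm, ← C_mul, C_mul', map_smul, smul_eq_mul,
    mul_comm _ (a ^ k)]

theorem sum_choose_mul_colBinomEulerianQ [NeZero r] (n : ℕ) :
    ∑ p ∈ antidiagonal n, (n.choose p.1 : ℚ[X]) * (((r : ℚ[X]) * X) ^ p.1 - X * (r : ℚ[X]) ^ p.1) *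
      colBinomEulerianQ p.2 r = (1 - X) * ((r : ℚ[X]) * X + 1) ^ n := by
  rw [← Polynomial.coe_inj]
  simp only [← Polynomial.coeToPowerSeries.ringHom_apply, map_sum, map_mul, map_sub, map_pow,
    map_add, map_one, map_natCast]
  simp only [Polynomial.coeToPowerSeries.ringHom_apply, Polynomial.coe_X, coe_colBinomEulerianQ_eq]
  set t : PowerSeries ℚ := PowerSeries.X
  set v : (PowerSeries ℚ)[X] := C (1 - t) * X + C t
  set P : (PowerSeries ℚ)[X] := (C (r * t) + v) ^ n
  have hcomp : P.comp (X + (r : (PowerSeries ℚ)[X])) = (C (r : PowerSeries ℚ) + v) ^ n := by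
    simp only [P, v, pow_comp, add_comp, mul_comp, C_comp, X_comp]
    simp only [map_mul, map_sub, map_one, map_natCast]
    ring
  have heval : P.eval 1 = (r * t + 1) ^ n := by
    simp only [P, v, eval_pow, eval_add, eval_mul, eval_C, eval_X]
    ring
  have hshift := progressionSeries_eq_eval_add_X_mul r P
  rw [hcomp, heval, progressionSeries_C_add_pow, progressionSeries_C_add_pow] at hshift
  rw [← sub_eq_of_eq_add hshift, mul_sub, mul_sum, mul_sum, mul_sum, ← sum_sub_distrib]
  exact sum_congr rfl fun p _ => by ring

end Series

open Nat in
lemma mk_mul_mk_factorial {A : Type*} [CommRing A] [Algebra ℚ A] (a b : ℕ → A) :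
    PowerSeries.mk (fun n => algebraMap ℚ A (n ! : ℚ)⁻¹ * a n) *
        PowerSeries.mk (fun n => algebraMap ℚ A (n ! : ℚ)⁻¹ * b n) =
      PowerSeries.mk fun n => algebraMap ℚ A (n ! : ℚ)⁻¹ *
        ∑ p ∈ antidiagonal n, n.choose p.1 * a p.1 * b p.2 := by
  ext n
  rw [PowerSeries.coeff_mul, PowerSeries.coeff_mk, mul_sum]
  refine sum_congr rfl fun p hp => ?_
  rw [HasAntidiagonal.mem_antidiagonal] at hp
  subst hp
  have hfac : ((p.1 ! : ℚ)⁻¹ * (p.2 ! : ℚ)⁻¹) = ((p.1 + p.2) ! : ℚ)⁻¹ * (p.1 + p.2).choose p.1 := by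
    have hchoose : ((p.1 + p.2).choose p.2 : ℚ) ≠ 0 :=
      Nat.cast_ne_zero.mpr (Nat.choose_pos (Nat.le_add_left _ _)).ne'
    rw [Nat.choose_symm_add, ← Nat.add_choose_mul_factorial_mul_factorial p.1 p.2]
    push_cast
    field_simp
  simp only [PowerSeries.coeff_mk]
  rw [← map_natCast (algebraMap ℚ A), mul_mul_mul_comm, ← map_mul, hfac, map_mul]
  ring

/-- For every `r ≥ 1`, in `(ℚ[t])[[z]]`:
`(e^{rtz} − t·e^{rz}) · Σ_{n≥0} Ã_{n,r}(t) zⁿ/n! = (1−t)·e^{(rt+1)z}`. -/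
theorem colBinomEulerian_egf (r : ℕ) (hr : 1 ≤ r) :
    (expz ((r : ℚ[X]) * Polynomial.X) -
        PowerSeries.C (R := ℚ[X]) Polynomial.X * expz (r : ℚ[X])) *
      PowerSeries.mk (fun n => Polynomial.C ((n.factorial : ℚ)⁻¹) * colBinomEulerianQ n r) =
    PowerSeries.C (R := ℚ[X]) (1 - Polynomial.X) * expz ((r : ℚ[X]) * Polynomial.X + 1) := by
  have : NeZero r := ⟨by omega⟩
  have hlhs : expz ((r : ℚ[X]) * X) - PowerSeries.C X * expz (r : ℚ[X]) =
      PowerSeries.mk fun n =>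
        C ((n.factorial : ℚ)⁻¹) * (((r : ℚ[X]) * X) ^ n - X * (r : ℚ[X]) ^ n) := by
    refine PowerSeries.ext fun n => ?_
    simp only [expz, map_sub, PowerSeries.coeff_C_mul, PowerSeries.coeff_mk]
    ring
  have hrhs : PowerSeries.C (1 - X) * expz ((r : ℚ[X]) * X + 1) =
      PowerSeries.mk fun n => C ((n.factorial : ℚ)⁻¹) * ((1 - X) * ((r : ℚ[X]) * X + 1) ^ n) := by
    refine PowerSeries.ext fun n => ?_
    simp only [expz, PowerSeries.coeff_C_mul, PowerSeries.coeff_mk]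
    ring
  rw [hlhs, hrhs, ← Polynomial.algebraMap_eq, mk_mul_mk_factorial]
  simp_rw [sum_choose_mul_colBinomEulerianQ]
end

section
/- Let Δ be a finite abstract simplicial complex on a linearly ordered vertex set, let r be a positive integer, and let a finite group G act simplicially on Δ preserving the induced linear order on vertex sets of faces, with induced action on V_r(Δ) given by (w·f)(v) = f(w⁻¹·v). For w ∈ G, let Δ^w be the subcomplex of Δ consisting of the faces F ∈ Δ with w·v = v for every v ∈ F, with its vertex set carrying the induced linear order. Then for every w ∈ G, a face E of esd_r(Δ) satisfies w(E) = E if and only if E is a face of esd_r(Δ^w) (under the natural inclusion V_r(Δ^w) ⊆ V_r(Δ)); that is, the fixed subcomplex esd_r(Δ)^w equals esd_r(Δ^w). -/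
open Finset

variable {V : Type*} [Fintype V] [DecidableEq V] [LinearOrder V]

/-- The support `supp(f) = {v : f(v) ≠ 0}` of a function `f : V → ℕ`. -/
def suppF (f : V → ℕ) : Finset V :=
  Finset.univ.filter fun v => f v ≠ 0

/-- `f` is a vertex of the `r`-fold edgewise subdivision of `Δ`, i.e. `f ∈ V_r(Δ)`:
`supp(f) ∈ Δ` and `Σ_v f(v) = r`. -/
def memVr (Δ : Finset (Finset V)) (r : ℕ) (f : V → ℕ) : Prop :=
  suppF f ∈ Δ ∧ ∑ v, f v = r

/-- `ι(f)(v) = Σ_{u ≤ v} f(u)`, the partial sums of `f` along the linear order on `V`. -/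
def iotaF (f : V → ℕ) (v : V) : ℕ :=
  ∑ u ∈ Finset.univ.filter (· ≤ v), f u

/-- Compatibility of two vertices of the edgewise subdivision:
`ι(f) − ι(g) ∈ {0,1}^V` or `ι(g) − ι(f) ∈ {0,1}^V`. -/
def iotaCompat (f g : V → ℕ) : Prop :=
  (∀ v, ((iotaF f v : ℤ) - iotaF g v) ∈ ({0, 1} : Set ℤ)) ∨
    (∀ v, ((iotaF g v : ℤ) - iotaF f v) ∈ ({0, 1} : Set ℤ))

/-- `E` is a face of the `r`-fold edgewise subdivision `esd_r(Δ)`: a finite set of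
elements of `V_r(Δ)` such that the union of their supports is a face of `Δ` and any two
of them are `ι`-compatible. -/
def IsEsdFace (Δ : Finset (Finset V)) (r : ℕ) (E : Finset (V → ℕ)) : Prop :=
  (∀ f ∈ E, memVr Δ r f) ∧ E.biUnion suppF ∈ Δ ∧
    ∀ f ∈ E, ∀ g ∈ E, iotaCompat f g

/-- The action of a group element `w` on `V_r(Δ)`: `(w·f)(v) = f(w⁻¹·v)`. -/
def actVr {G : Type*} [Group G] [MulAction G V] (w : G) (f : V → ℕ) : V → ℕ :=
  fun v => f (w⁻¹ • v)

/-- The fixed subcomplex `Δ^w`: the faces of `Δ` all of whose vertices are fixed by `w`. -/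
def fixedSubcomplex {V : Type*} [Fintype V] [DecidableEq V]
    {G : Type*} [Group G] [MulAction G V] (Δ : Finset (Finset V)) (w : G) :
    Finset (Finset V) :=
  Δ.filter fun F => ∀ v ∈ F, w • v = v

/-!
If `w` maps a face `E` of `esd_r(Δ)` onto itself, it maps the union `F` of the supports of the
elements of `E` onto itself. As `F ∈ Δ`, the action of `w` is strictly increasing on `F`, and a
strictly increasing self-map of a finite chain is the identity; so `w` fixes `F` pointwise, which
is exactly what membership in `esd_r(Δ^w)` adds. Conversely, `w` fixes every `f` whose support it
fixes pointwise.
-/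

theorem Finset.eqOn_id_of_strictMonoOn_of_mapsTo {α : Type*} [LinearOrder α] {s : Finset α}
    {σ : α → α} (hmono : StrictMonoOn σ s) (hmaps : Set.MapsTo σ s s) : Set.EqOn σ id s := by
  set e := s.orderEmbOfFin rfl
  have he : σ ∘ e = e :=
    orderEmbOfFin_unique rfl (fun i => hmaps (orderEmbOfFin_mem s rfl i))
      (fun _ _ hij => hmono (orderEmbOfFin_mem s rfl _) (orderEmbOfFin_mem s rfl _)
        (e.strictMono hij))
  intro v hv
  obtain ⟨i, rfl⟩ : v ∈ Set.range e := by rwa [range_orderEmbOfFin]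
  exact congrFun he i

theorem smul_eq_self_of_image_smul_eq {V : Type*} [DecidableEq V] [LinearOrder V]
    {G : Type*} [Group G] [MulAction G V] {Δ : Finset (Finset V)}
    (hdown : ∀ F ∈ Δ, ∀ F' ⊆ F, F' ∈ Δ)
    (horder : ∀ (w : G) (u v : V), ({u, v} : Finset V) ∈ Δ → u < v → w • u < w • v)
    {w : G} {F : Finset V} (hF : F ∈ Δ) (himg : F.image (w • ·) = F) :
    ∀ v ∈ F, w • v = v := by
  refine eqOn_id_of_strictMonoOn_of_mapsTo (fun u hu v hv huv => ?_) ?_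
  · exact horder w u v (hdown F hF _ (insert_subset hu (singleton_subset_iff.mpr hv))) huv
  · exact fun v hv => himg ▸ mem_image_of_mem _ hv

section EdgewiseSubdivision

variable {V : Type*} [Fintype V] [DecidableEq V] {G : Type*} [Group G] [MulAction G V]

theorem suppF_actVr (w : G) (f : V → ℕ) :
    suppF (actVr w f) = (suppF f).image (w • ·) := by
  ext v
  simp only [suppF, mem_filter, mem_univ, true_and, mem_image]
  simp only [actVr]
  exact ⟨fun h => ⟨w⁻¹ • v, h, smul_inv_smul w v⟩, by rintro ⟨u, hu, rfl⟩; rwa [inv_smul_smul]⟩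

theorem image_smul_biUnion_suppF (w : G) (E : Finset (V → ℕ)) :
    (E.biUnion suppF).image (w • ·) = (E.image (actVr w)).biUnion suppF := by
  simp only [biUnion_image, image_biUnion, suppF_actVr]

theorem actVr_eq_self {w : G} {f : V → ℕ} (hfix : ∀ v ∈ suppF f, w • v = v) :
    actVr w f = f := by
  funext v
  by_cases hv : v ∈ suppF f
  · rw [actVr, inv_smul_eq_iff.mpr (hfix v hv).symm]
  · have hv' : w⁻¹ • v ∉ suppF f := fun h => by
      have hfixed := hfix _ h
      rw [smul_inv_smul] at hfixed
      exact hv (hfixed ▸ h)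
    simp only [suppF, mem_filter, mem_univ, true_and, not_not] at hv hv'
    rw [actVr, hv, hv']

theorem image_actVr_eq_self {w : G} {E : Finset (V → ℕ)}
    (hfix : ∀ v ∈ E.biUnion suppF, w • v = v) : E.image (actVr w) = E := by
  conv_rhs => rw [← image_id (s := E)]
  exact image_congr fun f hf =>
    actVr_eq_self fun v hv => hfix v (mem_biUnion.mpr ⟨f, hf, hv⟩)

theorem isEsdFace_fixedSubcomplex_iff [LinearOrder V] {Δ : Finset (Finset V)} {r : ℕ} {w : G}
    {E : Finset (V → ℕ)} :
    IsEsdFace (fixedSubcomplex Δ w) r E ↔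
      IsEsdFace Δ r E ∧ ∀ v ∈ E.biUnion suppF, w • v = v := by
  simp only [IsEsdFace, memVr, fixedSubcomplex, mem_filter, mem_biUnion]
  constructor
  · rintro ⟨hmem, ⟨hΔ, hfix⟩, hcompat⟩
    exact ⟨⟨fun f hf => ⟨(hmem f hf).1.1, (hmem f hf).2⟩, hΔ, hcompat⟩, hfix⟩
  · rintro ⟨⟨hmem, hΔ, hcompat⟩, hfix⟩
    exact ⟨fun f hf => ⟨⟨(hmem f hf).1, fun v hv => hfix v ⟨f, hf, hv⟩⟩, (hmem f hf).2⟩,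
      ⟨hΔ, hfix⟩, hcompat⟩

end EdgewiseSubdivision

theorem esd_fixed_subcomplex_general
    {V : Type*} [Fintype V] [DecidableEq V] [LinearOrder V]
    {G : Type*} [Group G] [MulAction G V]
    (Δ : Finset (Finset V)) (r : ℕ)
    (hdown : ∀ F ∈ Δ, ∀ F' ⊆ F, F' ∈ Δ)
    (horder : ∀ (w : G) (u v : V), ({u, v} : Finset V) ∈ Δ → u < v → w • u < w • v) :
    ∀ (w : G) (E : Finset (V → ℕ)),
      (IsEsdFace Δ r E ∧ E.image (actVr w) = E) ↔ IsEsdFace (fixedSubcomplex Δ w) r E := by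
  intro w E
  rw [isEsdFace_fixedSubcomplex_iff]
  constructor
  · rintro ⟨hE, himg⟩
    refine ⟨hE, smul_eq_self_of_image_smul_eq hdown horder hE.2.1 ?_⟩
    rw [image_smul_biUnion_suppF, himg]
  · rintro ⟨hE, hfix⟩
    exact ⟨hE, image_actVr_eq_self hfix⟩

/-- Let `Δ` be a finite simplicial complex on a linearly ordered vertex
set and let the finite group `G` act simplicially on `Δ`, preserving the induced linear
order on vertex sets of faces. Then for every `w ∈ G`, a set `E` is a face of
`esd_r(Δ)` fixed setwise by `w` if and only if `E` is a face of `esd_r(Δ^w)`;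
that is, `esd_r(Δ)^w = esd_r(Δ^w)`. -/
theorem esd_fixed_subcomplex
    {V : Type*} [Fintype V] [DecidableEq V] [LinearOrder V]
    {G : Type*} [Group G] [Finite G] [MulAction G V]
    (Δ : Finset (Finset V)) (r : ℕ) (hr : 1 ≤ r)
    (hdown : ∀ F ∈ Δ, ∀ F' ⊆ F, F' ∈ Δ)
    (hact : ∀ (w : G), ∀ F ∈ Δ, F.image (fun v => w • v) ∈ Δ)
    (horder : ∀ (w : G) (u v : V), ({u, v} : Finset V) ∈ Δ → u < v → w • u < w • v) :
    ∀ (w : G) (E : Finset (V → ℕ)),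
      (IsEsdFace Δ r E ∧ E.image (actVr w) = E) ↔ IsEsdFace (fixedSubcomplex Δ w) r E :=
  esd_fixed_subcomplex_general Δ r hdown horder
end
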